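/- arXiv:2009.13941 — 2 statements merged into one kernel-verified Lean document; each statement's English description precedes it below -/
import Mathlib

section
/- Let E be a finite-dimensional real normed space, let h, θ, γ ≥ 1 be natural numbers, let φ be a Radon measure on E with compact support, and let K be a Borel subset of supp φ. Set η := 1/(h+1) and C := (η(1−η)^h/(32θ))^{h+2}. Let x ∈ E(θ,γ), 0 < r < 1/γ, and 0 < δ < C. Let V be an h-dimensional linear subspace of E and let ν be a Radon measure on E with support contained in x+V := {x+v : v ∈ V} such that ν(B̄(y,ρ)) = ρ^h for every y ∈ x+V and ρ > 0. If there exists Θ > 0 with F_{x,r}(φ⌞K, Θν) + F_{x,r}(φ, Θν) ≤ 2δ r^{h+1}, then for every w ∈ B̄(x, r/2) ∩ (x+V) one has φ(K ∩ B̄(w, δ^{1/(h+2)} r)) > 0; in particular K ∩ B̄(w, δ^{1/(h+2)} r) ≠ ∅. -/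
open MeasureTheory Metric Filter Set
open scoped ENNReal NNReal Topology

variable {E : Type*}

/-- The support of a measure: points all of whose neighborhoods have positive measure. -/
def msupport [NormedAddCommGroup E] [MeasurableSpace E] (φ : Measure E) : Set E :=
  {x : E | ∀ r : ℝ, 0 < r → 0 < φ (ball x r)}

/-- The set `E(θ,γ)` of points of the support where the measure of balls of radius `r < 1/γ`
is comparable to `r ^ h` with constant `θ`. -/
def Eset [NormedAddCommGroup E] [MeasurableSpace E]
    (φ : Measure E) (h θ γ : ℕ) : Set E :=
  {x : E | x ∈ msupport φ ∧ ∀ r : ℝ, 0 < r → r < 1 / γ →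
    ENNReal.ofReal (r ^ h / θ) ≤ φ (closedBall x r) ∧
    φ (closedBall x r) ≤ ENNReal.ofReal (θ * r ^ h)}

/-- The distance `F_K` between two measures: the supremum of the differences of integrals of
nonnegative `1`-Lipschitz functions vanishing outside `K`. -/
noncomputable def Fdist [NormedAddCommGroup E] [MeasurableSpace E]
    (φ ψ : Measure E) (K : Set E) : ℝ :=
  sSup {d : ℝ | ∃ f : E → ℝ, (∀ x, 0 ≤ f x) ∧ LipschitzWith 1 f ∧ (∀ x ∉ K, f x = 0) ∧
    d = |(∫ x, f x ∂φ) - ∫ x, f x ∂ψ|}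

/-!
Test both `F`-distances with tent functions `z ↦ max (s - dist z y) 0`, whose integral against a
measure `μ` is `∫₀ˢ μ(B̄(y, ρ)) dρ` by the layer-cake formula. Put `ε = δ^(1/(h+2))`. If
`K ∩ B̄(w, εr)` were `φ`-null, the tent of radius `εr` at `w` would have `φ⌞K`-integral `0` but
`Θν`-integral `Θ (εr)^(h+1) / (h+1)`, forcing `Θ ≤ 2(h+1)ε`. The tent of radius `r/2` at `x`
compares the lower density bound `ρ^h/θ` of `φ` with `Θ ρ^h`, forcing `1/θ - Θ ≤ 2(h+1)ε`.
Hence `1 ≤ 4θ(h+1)ε`, while the smallness of `δ` gives `32θ(h+1)ε < 1`.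
-/

section Tent

variable {X : Type*} [PseudoMetricSpace X]

def tent (y : X) (s : ℝ) (z : X) : ℝ := max (s - dist z y) 0

lemma tent_nonneg (y : X) (s : ℝ) (z : X) : 0 ≤ tent y s z := le_max_right _ _

lemma tent_le (y : X) {s : ℝ} (hs : 0 ≤ s) (z : X) : tent y s z ≤ s :=
  max_le (by linarith [dist_nonneg (x := z) (y := y)]) hs

lemma lipschitzWith_tent (y : X) (s : ℝ) : LipschitzWith 1 (tent y s) :=
  (((LipschitzWith.const s).sub (LipschitzWith.dist_left y)).max_const 0).weaken (by norm_num)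

lemma tent_eq_zero_of_notMem {y z : X} {s : ℝ} (hz : z ∉ closedBall y s) : tent y s z = 0 :=
  max_eq_right (by rw [mem_closedBall, not_le] at hz; linarith)

lemma le_tent_iff {y z : X} {s t : ℝ} (ht : 0 < t) :
    t ≤ tent y s z ↔ z ∈ closedBall y (s - t) := by
  rw [tent, le_max_iff, mem_closedBall]
  constructor
  · rintro (h | h) <;> linarith
  · intro h; left; linarith

variable [ProperSpace X] [MeasurableSpace X] (μ : Measure X) [IsFiniteMeasureOnCompacts μ]

lemma monotone_measureReal_closedBall (y : X) : Monotone fun ρ => μ.real (closedBall y ρ) :=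
  fun _ _ h => measureReal_mono (closedBall_subset_closedBall h) measure_closedBall_lt_top.ne

variable [OpensMeasurableSpace X]

lemma integrable_tent (y : X) (s : ℝ) : Integrable (tent y s) μ :=
  (lipschitzWith_tent y s).continuous.integrable_of_hasCompactSupport
    (HasCompactSupport.intro (isCompact_closedBall y s) fun _ => tent_eq_zero_of_notMem)

/-- Layer-cake formula for the tent function. -/
lemma integral_tent (y : X) {s : ℝ} (hs : 0 ≤ s) :
    ∫ z, tent y s z ∂μ = ∫ ρ in 0..s, μ.real (closedBall y ρ) := by
  rw [(integrable_tent μ y s).integral_eq_integral_Ioc_meas_le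
    (Eventually.of_forall (tent_nonneg y s)) (Eventually.of_forall (tent_le y hs))]
  calc ∫ t in Ioc 0 s, μ.real {z | t ≤ tent y s z}
      = ∫ t in Ioc 0 s, μ.real (closedBall y (s - t)) :=
        setIntegral_congr_fun measurableSet_Ioc fun t ht => by
          rw [show {z | t ≤ tent y s z} = closedBall y (s - t) from
            Set.ext fun _ => le_tent_iff ht.1]
    _ = ∫ ρ in 0..s, μ.real (closedBall y ρ) := by
        rw [← intervalIntegral.integral_of_le hs,
          intervalIntegral.integral_comp_sub_left (fun ρ => μ.real (closedBall y ρ)), sub_self,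
          sub_zero]

lemma integral_const_mul_pow (c s : ℝ) (h : ℕ) :
    ∫ ρ in 0..s, c * ρ ^ h = c * s ^ (h + 1) / (h + 1) := by
  rw [intervalIntegral.integral_const_mul, integral_pow]
  ring

lemma le_integral_tent (y : X) {s c : ℝ} (hs : 0 ≤ s) {h : ℕ}
    (hμ : ∀ ρ ∈ Ioo 0 s, c * ρ ^ h ≤ μ.real (closedBall y ρ)) :
    c * s ^ (h + 1) / (h + 1) ≤ ∫ z, tent y s z ∂μ := by
  rw [integral_tent μ y hs, ← integral_const_mul_pow]
  exact intervalIntegral.integral_mono_on_of_le_Ioo hs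
    ((continuous_const.mul (continuous_pow h)).intervalIntegrable _ _)
    (monotone_measureReal_closedBall μ y).intervalIntegrable hμ

lemma integral_tent_le (y : X) {s c : ℝ} (hs : 0 ≤ s) {h : ℕ}
    (hμ : ∀ ρ ∈ Ioo 0 s, μ.real (closedBall y ρ) ≤ c * ρ ^ h) :
    ∫ z, tent y s z ∂μ ≤ c * s ^ (h + 1) / (h + 1) := by
  rw [integral_tent μ y hs, ← integral_const_mul_pow]
  exact intervalIntegral.integral_mono_on_of_le_Ioo hs
    (monotone_measureReal_closedBall μ y).intervalIntegrable
    ((continuous_const.mul (continuous_pow h)).intervalIntegrable _ _) hμ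

end Tent

section Fdist

variable [NormedAddCommGroup E]

lemma Fdist_nonneg [MeasurableSpace E] (φ ψ : Measure E) (K : Set E) : 0 ≤ Fdist φ ψ K :=
  Real.sSup_nonneg fun _ ⟨_, _, _, _, hd⟩ => hd ▸ abs_nonneg _

lemma Fdist_comm [MeasurableSpace E] (φ ψ : Measure E) (K : Set E) :
    Fdist φ ψ K = Fdist ψ φ K := by
  simp only [Fdist, abs_sub_comm]

variable [NormedSpace ℝ E] [Nontrivial E]

lemma exists_forall_le_indicator_of_isBounded {K : Set E} (hK : Bornology.IsBounded K) :
    ∃ M : ℝ, ∀ f : E → ℝ, LipschitzWith 1 f → (∀ z ∉ K, f z = 0) →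
      ∀ z, f z ≤ K.indicator (fun _ => M) z := by
  obtain ⟨y, hy⟩ : ∃ y, y ∉ K := by
    by_contra! hKuniv
    exact NormedSpace.unbounded_univ ℝ E (hK.subset fun z _ => hKuniv z)
  obtain ⟨M, hM⟩ := (isBounded_iff_subset_closedBall y).1 hK
  refine ⟨M, fun f hf hfK z => ?_⟩
  by_cases hz : z ∈ K
  · rw [indicator_of_mem hz]
    calc f z = f z - f y := by rw [hfK y hy, sub_zero]
      _ ≤ dist z y := by simpa using hf.dist_le_mul z y |>.trans' (le_abs_self _)
      _ ≤ M := hM hz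
  · rw [indicator_of_notMem hz, hfK z hz]

lemma abs_integral_sub_le_Fdist [MeasurableSpace E] [OpensMeasurableSpace E] {φ ψ : Measure E}
    [IsFiniteMeasureOnCompacts φ] [IsFiniteMeasureOnCompacts ψ] {K : Set E} (hK : IsCompact K)
    {f : E → ℝ} (hf0 : ∀ z, 0 ≤ f z) (hf : LipschitzWith 1 f) (hfK : ∀ z ∉ K, f z = 0) :
    |∫ z, f z ∂φ - ∫ z, f z ∂ψ| ≤ Fdist φ ψ K := by
  obtain ⟨M, hM⟩ := exists_forall_le_indicator_of_isBounded hK.isBounded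
  have integral_le (μ : Measure E) [IsFiniteMeasureOnCompacts μ] {g : E → ℝ}
      (hg0 : ∀ z, 0 ≤ g z) (hg : LipschitzWith 1 g) (hgK : ∀ z ∉ K, g z = 0) :
      ∫ z, g z ∂μ ≤ μ.real K * M := by
    have hint : Integrable (K.indicator fun _ => M) μ :=
      (integrable_indicator_iff hK.measurableSet).2 (integrableOn_const hK.measure_ne_top)
    simpa [integral_indicator_const M hK.measurableSet] using
      integral_mono_of_nonneg (Eventually.of_forall hg0) hint
        (Eventually.of_forall (hM g hg hgK))
  refine le_csSup ⟨φ.real K * M + ψ.real K * M, ?_⟩ ⟨f, hf0, hf, hfK, rfl⟩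
  rintro _ ⟨g, hg0, hg, hgK, rfl⟩
  have hφ := integral_le φ hg0 hg hgK
  have hψ := integral_le ψ hg0 hg hgK
  have : 0 ≤ ∫ z, g z ∂φ := integral_nonneg hg0
  have : 0 ≤ ∫ z, g z ∂ψ := integral_nonneg hg0
  rw [abs_sub_le_iff]
  constructor <;> linarith

end Fdist

lemma le_of_mul_pow_div_le {a b s : ℝ} {n : ℕ} (hs : 0 < s)
    (h : a * s ^ (n + 1) / (n + 1) ≤ b * s ^ (n + 1)) : a ≤ (n + 1) * b := by
  have hsn : 0 < s ^ (n + 1) := by positivity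
  rw [div_le_iff₀ (by positivity)] at h
  nlinarith

section TestFunctions

variable [NormedAddCommGroup E] [NormedSpace ℝ E] [Nontrivial E] [ProperSpace E]
  [MeasurableSpace E] [OpensMeasurableSpace E]

lemma sub_mul_pow_div_le_Fdist {μ ψ : Measure E} [IsFiniteMeasureOnCompacts μ]
    [IsFiniteMeasureOnCompacts ψ] {x y : E} {r s a b : ℝ} {h : ℕ} (hs : 0 ≤ s)
    (hy : closedBall y s ⊆ closedBall x r)
    (hμ : ∀ ρ ∈ Ioo 0 s, a * ρ ^ h ≤ μ.real (closedBall y ρ))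
    (hψ : ∀ ρ ∈ Ioo 0 s, ψ.real (closedBall y ρ) ≤ b * ρ ^ h) :
    (a - b) * s ^ (h + 1) / (h + 1) ≤ Fdist μ ψ (closedBall x r) := by
  have hF := abs_integral_sub_le_Fdist (φ := μ) (ψ := ψ) (isCompact_closedBall x r)
    (tent_nonneg y s) (lipschitzWith_tent y s) fun z hz => tent_eq_zero_of_notMem (hz <| hy ·)
  have := le_integral_tent μ y hs hμ
  have := integral_tent_le ψ y hs hψ
  calc (a - b) * s ^ (h + 1) / (h + 1)
      = a * s ^ (h + 1) / (h + 1) - b * s ^ (h + 1) / (h + 1) := by ring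
    _ ≤ ∫ z, tent y s z ∂μ - ∫ z, tent y s z ∂ψ := by linarith
    _ ≤ _ := (le_abs_self _).trans hF

lemma le_two_mul_of_Fdist_restrict_le {φ μ : Measure E} [IsFiniteMeasureOnCompacts φ]
    [IsFiniteMeasureOnCompacts μ] {K : Set E} {x w : E} {r ε Θ : ℝ} {h : ℕ} (hr : 0 < r)
    (hε : 0 < ε) (hε1 : ε ≤ 1 / 2) (hwx : dist w x ≤ r / 2)
    (hμ : ∀ ρ > 0, Θ * ρ ^ h ≤ μ.real (closedBall w ρ))
    (hK : φ (K ∩ closedBall w (ε * r)) = 0)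
    (hF : Fdist (φ.restrict K) μ (closedBall x r) ≤ 2 * ε ^ (h + 2) * r ^ (h + 1)) :
    Θ ≤ (h + 1) * (2 * ε) := by
  have hKρ : ∀ ρ ∈ Ioo 0 (ε * r), (φ.restrict K).real (closedBall w ρ) ≤ 0 * ρ ^ h := by
    intro ρ hρ
    have hsub : closedBall w ρ ∩ K ⊆ K ∩ closedBall w (ε * r) :=
      fun z hz => ⟨hz.2, closedBall_subset_closedBall hρ.2.le hz.1⟩
    rw [zero_mul, measureReal_restrict_apply measurableSet_closedBall, measureReal_def,
      measure_mono_null hsub hK, ENNReal.toReal_zero]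
  have hA := sub_mul_pow_div_le_Fdist (x := x) (r := r) (by positivity)
    (closedBall_subset_closedBall' (by nlinarith)) (fun ρ hρ => hμ ρ hρ.1) hKρ
  rw [Fdist_comm, sub_zero] at hA
  refine le_of_mul_pow_div_le (s := ε * r) (by positivity) (hA.trans (hF.trans_eq ?_))
  ring

lemma sub_le_two_mul_of_Fdist_le {φ μ : Measure E} [IsFiniteMeasureOnCompacts φ]
    [IsFiniteMeasureOnCompacts μ] {x : E} {r ε Θ θ : ℝ} {h : ℕ} (hr : 0 < r)
    (hε : 0 ≤ ε) (hε1 : ε ≤ 1 / 2)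
    (hφ : ∀ ρ ∈ Ioo 0 (r / 2), 1 / θ * ρ ^ h ≤ φ.real (closedBall x ρ))
    (hμ : ∀ ρ > 0, μ.real (closedBall x ρ) ≤ Θ * ρ ^ h)
    (hF : Fdist φ μ (closedBall x r) ≤ 2 * ε ^ (h + 2) * r ^ (h + 1)) :
    1 / θ - Θ ≤ (h + 1) * (2 * ε) := by
  have hB := sub_mul_pow_div_le_Fdist (r := r) (by positivity)
    (closedBall_subset_closedBall (by linarith)) hφ fun ρ hρ => hμ ρ hρ.1
  refine le_of_mul_pow_div_le (s := r / 2) (half_pos hr) (hB.trans (hF.trans ?_))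
  have : (2 * ε) ^ (h + 1) ≤ 1 := pow_le_one₀ (by positivity) (by linarith)
  calc 2 * ε ^ (h + 2) * r ^ (h + 1) = 2 * ε * (2 * ε * (r / 2)) ^ (h + 1) := by
        rw [show 2 * ε * (r / 2) = ε * r by ring]; ring
    _ = 2 * ε * (2 * ε) ^ (h + 1) * (r / 2) ^ (h + 1) := by rw [mul_pow]; ring
    _ ≤ 2 * ε * 1 * (r / 2) ^ (h + 1) := by gcongr
    _ = 2 * ε * (r / 2) ^ (h + 1) := by ring

end TestFunctions

lemma rpow_one_div_natCast_add_two_pow {δ : ℝ} (hδ : 0 ≤ δ) (h : ℕ) :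
    (δ ^ ((1 : ℝ) / ((h : ℝ) + 2))) ^ (h + 2) = δ := by
  have := Real.rpow_inv_natCast_pow hδ (n := h + 2) (by omega)
  rwa [one_div, ← Nat.cast_ofNat, ← Nat.cast_add]

lemma rpow_one_div_natCast_add_two_lt {δ C : ℝ} (hδ : 0 ≤ δ) (hC : 0 ≤ C) {h : ℕ}
    (hδC : δ < C ^ (h + 2)) : δ ^ ((1 : ℝ) / ((h : ℝ) + 2)) < C := by
  rw [one_div, Real.rpow_inv_lt_iff_of_pos hδ hC (by positivity)]
  exact_mod_cast hδC

lemma mul_rpow_one_div_add_two_lt_one {δ θ : ℝ} (hδ : 0 ≤ δ) (hθ : 0 < θ) {h : ℕ}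
    (hδC : δ < (1 / ((h : ℝ) + 1) * (1 - 1 / ((h : ℝ) + 1)) ^ h / (32 * θ)) ^ (h + 2)) :
    32 * θ * (h + 1) * δ ^ ((1 : ℝ) / ((h : ℝ) + 2)) < 1 := by
  have hη : 1 / ((h : ℝ) + 1) ≤ 1 := by
    rw [div_le_one (by positivity)]; linarith [h.cast_nonneg (α := ℝ)]
  have hη' : 0 ≤ 1 - 1 / ((h : ℝ) + 1) := by linarith
  have hC : 1 / ((h : ℝ) + 1) * (1 - 1 / ((h : ℝ) + 1)) ^ h / (32 * θ) ≤
      1 / (32 * θ * (h + 1)) := by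
    calc _ ≤ 1 / ((h : ℝ) + 1) * 1 / (32 * θ) := by
          gcongr
          exact pow_le_one₀ hη' (by linarith [one_div_nonneg.2 (h.cast_add_one_pos (α := ℝ)).le])
      _ = 1 / (32 * θ * (h + 1)) := by field_simp
  have hε := (rpow_one_div_natCast_add_two_lt hδ (by positivity) hδC).trans_le hC
  rwa [lt_div_iff₀ (by positivity), mul_comm] at hε

lemma Eset.le_measureReal_closedBall [NormedAddCommGroup E] [ProperSpace E]
    [MeasurableSpace E] {φ : Measure E} [IsFiniteMeasureOnCompacts φ] {h θ γ : ℕ} {x : E}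
    (hx : x ∈ Eset φ h θ γ) {ρ : ℝ} (hρ : 0 < ρ) (hργ : ρ < 1 / γ) :
    1 / θ * ρ ^ h ≤ φ.real (closedBall x ρ) := by
  rw [one_div_mul_eq_div, measureReal_def,
    ← ENNReal.ofReal_le_iff_le_toReal measure_closedBall_lt_top.ne]
  exact (hx.2 ρ hρ hργ).1

theorem stmt6_general [NormedAddCommGroup E] [NormedSpace ℝ E] [FiniteDimensional ℝ E]
    [MeasurableSpace E] [BorelSpace E]
    (h θ γ : ℕ) (h1 : 1 ≤ h) (hθ : 1 ≤ θ)
    (φ : Measure E) [IsLocallyFiniteMeasure φ]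
    (K : Set E)
    (x : E) (hx : x ∈ Eset φ h θ γ) (r : ℝ) (hr0 : 0 < r) (hrγ : r < 1 / γ)
    (δ : ℝ) (hδ0 : 0 < δ)
    (hδC : δ < ((1 / ((h : ℝ) + 1)) * (1 - 1 / ((h : ℝ) + 1)) ^ h / (32 * θ)) ^ (h + 2))
    (V : Submodule ℝ E) (hV : Module.finrank ℝ V = h)
    (ν : Measure E) [IsLocallyFiniteMeasure ν]
    (hνball : ∀ y ∈ (x + ·) '' (V : Set E), ∀ ρ : ℝ, 0 < ρ →
      ν (closedBall y ρ) = ENNReal.ofReal (ρ ^ h))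
    (Θ : ℝ) (hΘ : 0 < Θ)
    (hF : Fdist (φ.restrict K) (ENNReal.ofReal Θ • ν) (closedBall x r) +
          Fdist φ (ENNReal.ofReal Θ • ν) (closedBall x r) ≤ 2 * δ * r ^ (h + 1)) :
    ∀ w ∈ closedBall x (r / 2) ∩ ((x + ·) '' (V : Set E)),
      0 < φ (K ∩ closedBall w (δ ^ ((1 : ℝ) / ((h : ℝ) + 2)) * r)) ∧
      (K ∩ closedBall w (δ ^ ((1 : ℝ) / ((h : ℝ) + 2)) * r)).Nonempty := by
  have : Nontrivial E := Module.nontrivial_of_finrank_pos (R := ℝ)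
    ((hV ▸ h1 : 0 < Module.finrank ℝ V).trans_le (Submodule.finrank_le V))
  have hθ0 : (0 : ℝ) < θ := by exact_mod_cast hθ
  set ε := δ ^ ((1 : ℝ) / ((h : ℝ) + 2))
  have hεδ : ε ^ (h + 2) = δ := rpow_one_div_natCast_add_two_pow hδ0.le h
  have hε : 32 * θ * (h + 1) * ε < 1 := mul_rpow_one_div_add_two_lt_one hδ0.le hθ0 hδC
  have hε0 : 0 < ε := by positivity
  have hε1 : ε ≤ 1 / 2 := by
    have : (1 : ℝ) ≤ θ * (h + 1) := one_le_mul_of_one_le_of_one_le (by exact_mod_cast hθ)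
      (by linarith [h.cast_nonneg (α := ℝ)])
    nlinarith
  set μ := ENNReal.ofReal Θ • ν
  have : IsFiniteMeasureOnCompacts μ := .smul ν ENNReal.ofReal_ne_top
  have hμ : ∀ y ∈ (x + ·) '' (V : Set E), ∀ ρ > 0, μ.real (closedBall y ρ) = Θ * ρ ^ h :=
    fun y hy ρ hρ => by simp [μ, measureReal_def, hνball y hy ρ hρ, hΘ.le, (pow_pos hρ h).le]
  rintro w ⟨hwx, hwV⟩
  have hpos : 0 < φ (K ∩ closedBall w (ε * r)) := by
    by_contra! hzero
    have hΘε : Θ ≤ (h + 1) * (2 * ε) :=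
      le_two_mul_of_Fdist_restrict_le hr0 hε0 hε1 (mem_closedBall.1 hwx)
        (fun ρ hρ => (hμ w hwV ρ hρ).ge) (le_zero_iff.1 hzero)
        (by rw [hεδ]; linarith [Fdist_nonneg φ μ (closedBall x r)])
    have hθΘ : 1 / θ - Θ ≤ (h + 1) * (2 * ε) :=
      sub_le_two_mul_of_Fdist_le hr0 hε0.le hε1
        (fun ρ hρ => Eset.le_measureReal_closedBall hx hρ.1 (by linarith [hρ.2]))
        (fun ρ hρ => (hμ x ⟨0, V.zero_mem, add_zero x⟩ ρ hρ).le)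
        (by rw [hεδ]; linarith [Fdist_nonneg (φ.restrict K) μ (closedBall x r)])
    have : 1 ≤ θ * ((h + 1) * (4 * ε)) := by rw [← div_le_iff₀' hθ0]; linarith
    linarith
  exact ⟨hpos, nonempty_of_measure_ne_zero hpos.ne'⟩

theorem stmt6 [NormedAddCommGroup E] [NormedSpace ℝ E] [FiniteDimensional ℝ E]
    [MeasurableSpace E] [BorelSpace E]
    (h θ γ : ℕ) (h1 : 1 ≤ h) (hθ : 1 ≤ θ) (hγ : 1 ≤ γ)
    (φ : Measure E) [IsLocallyFiniteMeasure φ]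
    (hcpt : ∃ Kc : Set E, IsCompact Kc ∧ φ Kcᶜ = 0)
    (K : Set E) (hKmeas : MeasurableSet K) (hKsupp : K ⊆ msupport φ)
    (x : E) (hx : x ∈ Eset φ h θ γ) (r : ℝ) (hr0 : 0 < r) (hrγ : r < 1 / γ)
    (δ : ℝ) (hδ0 : 0 < δ)
    (hδC : δ < ((1 / ((h : ℝ) + 1)) * (1 - 1 / ((h : ℝ) + 1)) ^ h / (32 * θ)) ^ (h + 2))
    (V : Submodule ℝ E) (hV : Module.finrank ℝ V = h)
    (ν : Measure E) [IsLocallyFiniteMeasure ν]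
    (hνsupp : ν (((x + ·) '' (V : Set E))ᶜ) = 0)
    (hνball : ∀ y ∈ (x + ·) '' (V : Set E), ∀ ρ : ℝ, 0 < ρ →
      ν (closedBall y ρ) = ENNReal.ofReal (ρ ^ h))
    (Θ : ℝ) (hΘ : 0 < Θ)
    (hF : Fdist (φ.restrict K) (ENNReal.ofReal Θ • ν) (closedBall x r) +
          Fdist φ (ENNReal.ofReal Θ • ν) (closedBall x r) ≤ 2 * δ * r ^ (h + 1)) :
    ∀ w ∈ closedBall x (r / 2) ∩ ((x + ·) '' (V : Set E)),
      0 < φ (K ∩ closedBall w (δ ^ ((1 : ℝ) / ((h : ℝ) + 2)) * r)) ∧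
      (K ∩ closedBall w (δ ^ ((1 : ℝ) / ((h : ℝ) + 2)) * r)).Nonempty :=
  stmt6_general h θ γ h1 hθ φ K x hx r hr0 hrγ δ hδ0 hδC V hV ν hνball Θ hΘ hF
end

section
/- Let E be a finite-dimensional real normed space, let V and L be complementary linear subspaces of E with h := dim V ≥ 1, and suppose C > 0 satisfies C‖P_L g‖ ≤ dist(g, V) for every g ∈ E; let 0 < α < C/2. Then there exists a constant C₀ > 0, depending only on E, V and L, such that: for every compact C_V(α)-set Γ ⊆ E with μH^h(Γ) < ∞ and with Θ^h_*(μH^h⌞Γ, x) > 0 for μH^h-almost every x ∈ Γ, one has that for μH^h-almost every x ∈ Γ there exists R > 0 such that for all 0 < ℓ ≤ R: μH^h(P_V(Γ ∩ B̄(x,ℓ))) ≥ C₀ · Θ^h_*(μH^h⌞Γ, x)² · ℓ^h. -/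
open MeasureTheory Metric Filter Set
open scoped ENNReal Topology

variable {E : Type*}

/-- Lower `h`-density of a measure at a point. -/
noncomputable def lowerDensity [NormedAddCommGroup E] [MeasurableSpace E]
    (φ : Measure E) (h : ℝ) (x : E) : ℝ≥0∞ :=
  liminf (fun r : ℝ => φ (closedBall x r) / ENNReal.ofReal (r ^ h)) (𝓝[>] (0 : ℝ))

/-- The cone `C_V(α)` of all points whose distance from `V` is at most `α` times their norm. -/
def cone [NormedAddCommGroup E] [NormedSpace ℝ E] (V : Submodule ℝ E) (α : ℝ) : Set E :=
  {w : E | infDist w (V : Set E) ≤ α * ‖w‖}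

/-- A `C_V(α)`-set: all differences of pairs of points of `Γ` lie in the cone `C_V(α)`. -/
def IsConeSet [NormedAddCommGroup E] [NormedSpace ℝ E]
    (V : Submodule ℝ E) (α : ℝ) (Γ : Set E) : Prop :=
  ∀ p ∈ Γ, ∀ q ∈ Γ, q - p ∈ cone V α

/-- The projection onto `P` along the complementary subspace `Q`, viewed as a map `E → E`. -/
noncomputable def splitProj [NormedAddCommGroup E] [NormedSpace ℝ E]
    (P Q : Submodule ℝ E) (hc : IsCompl P Q) (g : E) : E :=
  (P.linearProjOfIsCompl Q hc g : E)


/-!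
Write `Θ(x)` for the lower `h`-density of `μH^h⌞Γ` at `x` and `π := P_V`.

Since `2α < C`, every `w ∈ C_V(α)` satisfies `‖P_L w‖ ≤ ‖w‖ / 2`, hence `‖w‖ ≤ 2‖π w‖`. On the
`C_V(α)`-set `Γ` the projection `π` is therefore injective with a `2`-Lipschitz inverse, and
`μH^h(S) ≤ 2^h μH^h(π S)` for every `S ⊆ Γ`.

A Vitali covering argument shows that a finite measure `μ ≤ μH^d` cannot satisfy
`μ(B̄(x,r)) ≥ c r^d` for all small `r` on a set of positive `μ`-measure when `c > 8^d`; thus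
`Θ ≤ 2·8^h` almost everywhere. For small `ℓ`,
`μH^h(π(Γ ∩ B̄(x,ℓ))) ≥ 2^{-h} μH^h(Γ ∩ B̄(x,ℓ)) ≥ 2^{-h} (Θ/2) ℓ^h`, and `Θ ≥ Θ² / (2·8^h)`.
-/

open scoped NNReal

theorem hausdorffMeasure_le_mul_hausdorffMeasure_image {X Y : Type*} [MetricSpace X]
    [MeasurableSpace X] [BorelSpace X] [MetricSpace Y] [MeasurableSpace Y] [BorelSpace Y]
    {f : X → Y} {K : ℝ≥0} {s : Set X} (hf : ∀ p ∈ s, ∀ q ∈ s, dist p q ≤ K * dist (f p) (f q))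
    {d : ℝ} (hd : 0 ≤ d) : μH[d] s ≤ (K : ℝ≥0∞) ^ d * μH[d] (f '' s) := by
  have hanti : AntilipschitzWith K (f ∘ ((↑) : s → X)) :=
    AntilipschitzWith.of_le_mul_dist fun p q => hf p p.2 q q.2
  have himage := hanti.le_hausdorffMeasure_image hd univ
  rwa [image_univ, range_comp, Subtype.range_coe,
    ← isometry_subtype_coe.hausdorffMeasure_image (Or.inl hd), image_univ, Subtype.range_coe]
    at himage

section Covering

variable {X : Type*} [MetricSpace X]

theorem ediam_closedBall_le_ofReal (x : X) (r : ℝ) :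
    ediam (closedBall x r) ≤ ENNReal.ofReal (2 * r) :=
  ediam_le_of_forall_dist_le fun _ hy _ hz =>
    (dist_triangle_right _ _ x).trans (by linarith [mem_closedBall.1 hy, mem_closedBall.1 hz])

theorem ediam_closedBall_four_mul_rpow_le (x : X) {r d : ℝ} (hr : 0 ≤ r) (hd : 0 ≤ d) :
    ediam (closedBall x (4 * r)) ^ d ≤ 8 ^ d * ENNReal.ofReal (r ^ d) :=
  calc ediam (closedBall x (4 * r)) ^ d ≤ ENNReal.ofReal (8 * r) ^ d := by
        refine ENNReal.rpow_le_rpow ((ediam_closedBall_le_ofReal x _).trans_eq ?_) hd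
        ring_nf
    _ = 8 ^ d * ENNReal.ofReal (r ^ d) := by
        rw [ENNReal.ofReal_mul (by norm_num), ENNReal.mul_rpow_of_nonneg _ _ hd,
          ENNReal.ofReal_rpow_of_nonneg hr hd, ENNReal.ofReal_ofNat]

variable [MeasurableSpace X] [BorelSpace X]

theorem Set.PairwiseDisjoint.countable_of_measure_closedBall_pos (μ : Measure X) [SFinite μ]
    {u : Set X} {r : X → ℝ} (hdisj : u.PairwiseDisjoint fun b => closedBall b (r b))
    (hpos : ∀ b ∈ u, 0 < μ (closedBall b (r b))) : u.Countable := by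
  have hcount := Measure.countable_meas_pos_of_disjoint_iUnion₀ (μ := μ)
    (As := fun b : u => closedBall (b : X) (r b))
    (fun _ => measurableSet_closedBall.nullMeasurableSet)
    (fun i j hij => (hdisj i.2 j.2 (Subtype.coe_injective.ne hij)).aedisjoint)
  have hall : {b : u | 0 < μ (closedBall (b : X) (r b))} = univ :=
    eq_univ_of_forall fun b => hpos b b.2
  rw [hall, countable_univ_iff] at hcount
  exact countable_coe_iff.mp hcount

theorem exists_countable_closedBall_cover_tsum_le (μ : Measure X) [SFinite μ] {d : ℝ}
    (hd : 0 ≤ d) {c : ℝ≥0} (hc : c ≠ 0) {s U : Set X} (hU : IsOpen U) (hsU : s ⊆ U)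
    {δ : ℝ} (hδ : 0 < δ)
    (hs : ∀ x ∈ s, ∀ r, 0 < r → r ≤ δ → c * ENNReal.ofReal (r ^ d) ≤ μ (closedBall x r)) :
    ∃ (u : Set X) (r : X → ℝ), u.Countable ∧ (∀ b ∈ u, r b ≤ δ) ∧
      s ⊆ ⋃ b ∈ u, closedBall b (4 * r b) ∧
      c * ∑' b : u, ediam (closedBall (b : X) (4 * r b)) ^ d ≤ 8 ^ d * μ U := by
  have hrad : ∀ y ∈ s, ∃ r, 0 < r ∧ r ≤ δ ∧ closedBall y r ⊆ U := fun y hy => by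
    obtain ⟨ε, hε, hεU⟩ := nhds_basis_closedBall.mem_iff.mp (hU.mem_nhds (hsU hy))
    exact ⟨min δ ε, lt_min hδ hε, min_le_left _ _,
      (closedBall_subset_closedBall (min_le_right _ _)).trans hεU⟩
  choose! r hr0 hrδ hrU using hrad
  -- Vitali needs an enlargement factor `> 3`; with `4` the enlarged balls have diameter `≤ 8 r`.
  obtain ⟨u, hus, hdisj, hcov⟩ :=
    Vitali.exists_disjoint_subfamily_covering_enlargement_closedBall s id r δ hrδ 4 (by norm_num)
  simp only [id] at hdisj hcov
  have hball : ∀ b ∈ u, c * ENNReal.ofReal (r b ^ d) ≤ μ (closedBall b (r b)) := fun b hb =>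
    hs b (hus hb) _ (hr0 b (hus hb)) (hrδ b (hus hb))
  have hu : u.Countable := hdisj.countable_of_measure_closedBall_pos μ fun b hb =>
    (ENNReal.mul_pos (by simpa using hc)
      (ENNReal.ofReal_pos.2 (Real.rpow_pos_of_pos (hr0 b (hus hb)) d)).ne').trans_le (hball b hb)
  refine ⟨u, r, hu, fun b hb => hrδ b (hus hb), fun a ha => ?_, ?_⟩
  · obtain ⟨b, hb, hab⟩ := hcov a ha
    exact mem_biUnion hb (hab (mem_closedBall_self (hr0 a ha).le))
  calc c * ∑' b : u, ediam (closedBall (b : X) (4 * r b)) ^ d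
      ≤ c * ∑' b : u, 8 ^ d * ENNReal.ofReal (r b ^ d) := by
        gcongr with b
        exact ediam_closedBall_four_mul_rpow_le _ (hr0 _ (hus b.2)).le hd
    _ = 8 ^ d * ∑' b : u, c * ENNReal.ofReal (r b ^ d) := by
        rw [ENNReal.tsum_mul_left, ENNReal.tsum_mul_left]; ring
    _ ≤ 8 ^ d * ∑' b : u, μ (closedBall b (r b)) := by
        gcongr with b
        exact hball b b.2
    _ = 8 ^ d * μ (⋃ b ∈ u, closedBall b (r b)) := by
        rw [measure_biUnion hu hdisj fun _ _ => measurableSet_closedBall]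
    _ ≤ 8 ^ d * μ U := by
        gcongr
        exact iUnion₂_subset fun b hb => hrU b (hus hb)

theorem mul_hausdorffMeasure_le_of_le_measure_closedBall (μ : Measure X) [SFinite μ] {d : ℝ}
    (hd : 0 ≤ d) {c : ℝ≥0} (hc : c ≠ 0) {s U : Set X} (hU : IsOpen U) (hsU : s ⊆ U)
    {ρ : ℝ} (hρ : 0 < ρ)
    (hs : ∀ x ∈ s, ∀ r, 0 < r → r ≤ ρ → c * ENNReal.ofReal (r ^ d) ≤ μ (closedBall x r)) :
    c * μH[d] s ≤ 8 ^ d * μ U := by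
  set δ : ℕ → ℝ := fun n => ρ / (n + 1)
  have hδ : ∀ n, 0 < δ n := fun n => by positivity
  have hδρ : ∀ n, δ n ≤ ρ := fun n => div_le_self hρ.le (by linarith [n.cast_nonneg (α := ℝ)])
  choose u r hu hrδ hcov hsum using fun n => exists_countable_closedBall_cover_tsum_le μ hd hc
    hU hsU (hδ n) fun x hx r hr hrδ => hs x hx r hr (hrδ.trans (hδρ n))
  have : ∀ n, Countable (u n) := fun n => (hu n).to_subtype
  have hδ0 : Tendsto (fun n => ENNReal.ofReal (8 * δ n)) atTop (𝓝 0) := by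
    simpa using ENNReal.tendsto_ofReal
      ((tendsto_const_div_atTop_nhds_zero_nat ρ).comp (tendsto_add_atTop_nat 1) |>.const_mul 8)
  have hdiam : ∀ n (b : u n),
      ediam (closedBall (b : X) (4 * r n b)) ≤ ENNReal.ofReal (8 * δ n) := fun n b =>
    (ediam_closedBall_le_ofReal _ _).trans (ENNReal.ofReal_le_ofReal (by linarith [hrδ n b b.2]))
  have hsum' : ∀ n, ∑' b : u n, ediam (closedBall (b : X) (4 * r n b)) ^ d ≤ 8 ^ d * μ U / c :=
    fun n => by
      rw [ENNReal.le_div_iff_mul_le (Or.inl (by simpa using hc)) (Or.inl ENNReal.coe_ne_top),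
        mul_comm]
      exact hsum n
  refine ENNReal.mul_le_of_le_div' ?_
  calc μH[d] s
      ≤ liminf (fun n => ∑' b : u n, ediam (closedBall (b : X) (4 * r n b)) ^ d) atTop :=
        Measure.hausdorffMeasure_le_liminf_tsum d s _ hδ0 _ (.of_forall hdiam)
          (.of_forall fun n => by simpa only [biUnion_eq_iUnion] using hcov n)
    _ ≤ 8 ^ d * μ U / c := liminf_le_of_frequently_le' (.of_forall hsum')

theorem measure_eq_zero_of_le_measure_closedBall (μ : Measure X) [IsFiniteMeasure μ]
    {d : ℝ} (hd : 0 ≤ d) (hμ : μ ≤ μH[d]) {c : ℝ≥0} (hc : 8 ^ d < (c : ℝ≥0∞)) {s : Set X}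
    {ρ : ℝ} (hρ : 0 < ρ)
    (hs : ∀ x ∈ s, ∀ r, 0 < r → r ≤ ρ → c * ENNReal.ofReal (r ^ d) ≤ μ (closedBall x r)) :
    μ s = 0 := by
  have hc0 : c ≠ 0 := by rintro rfl; simp at hc
  have h8 : (8 : ℝ≥0∞) ^ d ≠ ⊤ := ENNReal.rpow_ne_top_of_nonneg hd (by norm_num)
  have hle : c * μH[d] s ≤ 8 ^ d * μ s := by
    rw [Set.measure_eq_iInf_isOpen s μ]
    simp only [ENNReal.mul_iInf_of_ne (ENNReal.rpow_pos (by norm_num) (by norm_num)).ne' h8]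
    exact le_iInf₂ fun U hsU => le_iInf fun hU =>
      mul_hausdorffMeasure_le_of_le_measure_closedBall μ hd hc0 hU hsU hρ hs
  have hfin : μH[d] s ≠ ⊤ := by
    refine fun htop => (ENNReal.mul_lt_top h8.lt_top (measure_lt_top μ s)).not_ge ?_
    simpa [htop, hc0] using hle
  have hzero : μH[d] s = 0 := by
    by_contra hne
    refine hc.not_ge ((ENNReal.mul_le_mul_iff_left hne hfin).1 ?_)
    exact hle.trans (mul_le_mul_right (hμ s) _)
  exact le_antisymm ((hμ s).trans hzero.le) zero_le

end Covering

section Density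

variable [NormedAddCommGroup E] [MeasurableSpace E]

theorem exists_le_measure_closedBall_of_lt_lowerDensity (μ : Measure E) {d : ℝ} {x : E}
    {c : ℝ≥0∞} (hc : c < lowerDensity μ d x) :
    ∃ R > 0, ∀ r, 0 < r → r ≤ R → c * ENNReal.ofReal (r ^ d) ≤ μ (closedBall x r) := by
  obtain ⟨R, hR, hsub⟩ := mem_nhdsGT_iff_exists_Ioc_subset.mp (eventually_lt_of_lt_liminf hc)
  refine ⟨R, hR, fun r hr hrR => ?_⟩
  have hpos : ENNReal.ofReal (r ^ d) ≠ 0 := (ENNReal.ofReal_pos.2 (Real.rpow_pos_of_pos hr d)).ne'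
  exact (ENNReal.le_div_iff_mul_le (Or.inl hpos) (Or.inl ENNReal.ofReal_ne_top)).1
    (hsub ⟨hr, hrR⟩).le

theorem ae_lowerDensity_le [BorelSpace E] (μ : Measure E) [IsFiniteMeasure μ] {d : ℝ}
    (hd : 0 ≤ d) (hμ : μ ≤ μH[d]) {c : ℝ≥0} (hc : 8 ^ d < (c : ℝ≥0∞)) :
    ∀ᵐ x ∂μ, lowerDensity μ d x ≤ c := by
  have hsub : {x | ¬lowerDensity μ d x ≤ c} ⊆ ⋃ n : ℕ,
      {x | ∀ r : ℝ, 0 < r → r ≤ 1 / ((n : ℝ) + 1) →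
        c * ENNReal.ofReal (r ^ d) ≤ μ (closedBall x r)} := fun x hx => by
    obtain ⟨R, hR, hball⟩ := exists_le_measure_closedBall_of_lt_lowerDensity μ (not_le.1 hx)
    obtain ⟨n, hn⟩ := exists_nat_one_div_lt hR
    exact mem_iUnion.2 ⟨n, fun r hr hrn => hball r hr (hrn.trans hn.le)⟩
  exact measure_mono_null hsub (measure_iUnion_null fun n =>
    measure_eq_zero_of_le_measure_closedBall μ hd hμ hc Nat.one_div_pos_of_nat fun _ hx => hx)

end Density

section Projection

variable [NormedAddCommGroup E] [NormedSpace ℝ E] {V L : Submodule ℝ E}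

theorem splitProj_add_splitProj (hc : IsCompl V L) (g : E) :
    splitProj V L hc g + splitProj L V hc.symm g = g :=
  Submodule.projection_add_projection_eq_self hc g

theorem splitProj_sub (hc : IsCompl V L) (p q : E) :
    splitProj V L hc (p - q) = splitProj V L hc p - splitProj V L hc q := by
  simp only [splitProj, map_sub, Submodule.coe_sub]

theorem norm_le_two_mul_norm_splitProj_of_mem_cone (hc : IsCompl V L) {C α : ℝ} (hC : 0 < C)
    (hproj : ∀ g : E, C * ‖splitProj L V hc.symm g‖ ≤ infDist g (V : Set E))
    (hαC : 2 * α ≤ C) {w : E} (hw : w ∈ cone V α) :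
    ‖w‖ ≤ 2 * ‖splitProj V L hc w‖ := by
  have hL : ‖splitProj L V hc.symm w‖ ≤ ‖w‖ / 2 :=
    le_of_mul_le_mul_left ((hproj w).trans (hw.trans (by nlinarith [norm_nonneg w]))) hC
  have htri := norm_add_le (splitProj V L hc w) (splitProj L V hc.symm w)
  rw [splitProj_add_splitProj] at htri
  linarith

theorem IsConeSet.hausdorffMeasure_le_two_rpow_mul_splitProj_image [MeasurableSpace E]
    [BorelSpace E] (hc : IsCompl V L) {C α : ℝ} (hC : 0 < C)
    (hproj : ∀ g : E, C * ‖splitProj L V hc.symm g‖ ≤ infDist g (V : Set E))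
    (hαC : 2 * α ≤ C) {Γ S : Set E} (hΓ : IsConeSet V α Γ) (hS : S ⊆ Γ) {d : ℝ} (hd : 0 ≤ d) :
    μH[d] S ≤ 2 ^ d * μH[d] (splitProj V L hc '' S) := by
  refine (hausdorffMeasure_le_mul_hausdorffMeasure_image (f := splitProj V L hc) (K := 2)
    (fun p hp q hq => ?_) hd).trans_eq (by norm_num)
  rw [dist_eq_norm, dist_eq_norm, ← splitProj_sub, NNReal.coe_ofNat]
  exact norm_le_two_mul_norm_splitProj_of_mem_cone hc hC hproj hαC (hΓ q (hS hq) p (hS hp))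

end Projection

theorem ENNReal.inv_mul_mul_sq_le {M K Θ : ℝ≥0∞} (hM0 : M ≠ 0) (hMt : M ≠ ⊤) (hΘ : Θ ≤ M) :
    (M * K)⁻¹ * Θ ^ 2 ≤ K⁻¹ * Θ :=
  calc (M * K)⁻¹ * Θ ^ 2 = K⁻¹ * (M⁻¹ * Θ) * Θ := by
        rw [ENNReal.mul_inv (Or.inl hM0) (Or.inl hMt)]; ring
    _ ≤ K⁻¹ * (M⁻¹ * M) * Θ := by gcongr
    _ = K⁻¹ * Θ := by rw [ENNReal.inv_mul_cancel hM0 hMt, mul_one]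

theorem stmt16_general [NormedAddCommGroup E] [NormedSpace ℝ E]
    [MeasurableSpace E] [BorelSpace E]
    (V L : Submodule ℝ E) (hc : IsCompl V L) (h : ℕ)
    (C : ℝ) (hC : 0 < C)
    (hproj : ∀ g : E, C * ‖splitProj L V hc.symm g‖ ≤ infDist g (V : Set E))
    (α : ℝ) (hαC : α < C / 2) :
    ∃ C₀ : ℝ, 0 < C₀ ∧
      ∀ Γ : Set E, IsCompact Γ → IsConeSet V α Γ → μH[(h : ℝ)] Γ < ⊤ →
        (∀ᵐ x ∂(μH[(h : ℝ)].restrict Γ), 0 < lowerDensity (μH[(h : ℝ)].restrict Γ) h x) →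
        ∀ᵐ x ∂(μH[(h : ℝ)].restrict Γ), ∃ R : ℝ, 0 < R ∧ ∀ ℓ : ℝ, 0 < ℓ → ℓ ≤ R →
          ENNReal.ofReal C₀ * (lowerDensity (μH[(h : ℝ)].restrict Γ) h x) ^ 2 *
              ENNReal.ofReal (ℓ ^ h) ≤
            μH[(h : ℝ)] (splitProj V L hc '' (Γ ∩ closedBall x ℓ)) := by
  refine ⟨((2 * 8 ^ h) * (2 ^ h * 2))⁻¹, by positivity, fun Γ hΓc hΓ hfin hpos => ?_⟩
  set φ := μH[(h : ℝ)].restrict Γ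
  have : IsFiniteMeasure φ := ⟨by simpa [φ] using hfin⟩
  have hM : (8 : ℝ≥0∞) ^ (h : ℝ) < ((2 * 8 ^ h : ℝ≥0) : ℝ≥0∞) := by
    rw [ENNReal.rpow_natCast]
    exact_mod_cast lt_two_mul_self (pow_pos (by norm_num : (0 : ℝ≥0) < 8) h)
  filter_upwards [hpos, ae_lowerDensity_le φ h.cast_nonneg Measure.restrict_le_self hM]
    with x hx0 hxM
  obtain ⟨R, hR, hball⟩ := exists_le_measure_closedBall_of_lt_lowerDensity φ
    (ENNReal.half_lt_self hx0.ne' (ne_top_of_le_ne_top ENNReal.coe_ne_top hxM))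
  refine ⟨R, hR, fun ℓ hℓ hℓR => ?_⟩
  calc ENNReal.ofReal ((2 * 8 ^ h) * (2 ^ h * 2))⁻¹ * lowerDensity φ h x ^ 2 *
        ENNReal.ofReal (ℓ ^ h)
      ≤ (2 ^ h)⁻¹ * (lowerDensity φ h x / 2 * ENNReal.ofReal (ℓ ^ (h : ℝ))) := by
        have hC₀ : ENNReal.ofReal ((2 * 8 ^ h) * (2 ^ h * 2))⁻¹
            = (((2 * 8 ^ h : ℝ≥0) : ℝ≥0∞) * (2 ^ h * 2))⁻¹ := by
          rw [ENNReal.ofReal_inv_of_pos (by positivity)]; norm_num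
        rw [hC₀, Real.rpow_natCast, ← mul_assoc ((2 : ℝ≥0∞) ^ h)⁻¹]
        gcongr ?_ * _
        refine (ENNReal.inv_mul_mul_sq_le (by simp) ENNReal.coe_ne_top hxM).trans_eq ?_
        rw [ENNReal.mul_inv (Or.inr ENNReal.ofNat_ne_top) (Or.inr two_ne_zero), div_eq_mul_inv]
        ring
    _ ≤ (2 ^ h)⁻¹ * φ (closedBall x ℓ) := by gcongr; exact hball ℓ hℓ hℓR
    _ = (2 ^ h)⁻¹ * μH[(h : ℝ)] (Γ ∩ closedBall x ℓ) := by
        rw [Measure.restrict_apply' hΓc.measurableSet, inter_comm]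
    _ ≤ (2 ^ h)⁻¹ * (2 ^ h * μH[(h : ℝ)] (splitProj V L hc '' (Γ ∩ closedBall x ℓ))) := by
        gcongr
        simpa using hΓ.hausdorffMeasure_le_two_rpow_mul_splitProj_image hc hC hproj (by linarith)
          inter_subset_left h.cast_nonneg
    _ = μH[(h : ℝ)] (splitProj V L hc '' (Γ ∩ closedBall x ℓ)) :=
        ENNReal.inv_mul_cancel_left (pow_ne_zero _ two_ne_zero)
          (ENNReal.pow_ne_top ENNReal.ofNat_ne_top)

theorem stmt16 [NormedAddCommGroup E] [NormedSpace ℝ E] [FiniteDimensional ℝ E]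
    [MeasurableSpace E] [BorelSpace E]
    (V L : Submodule ℝ E) (hc : IsCompl V L) (h : ℕ) (h1 : 1 ≤ h)
    (hdim : Module.finrank ℝ V = h)
    (C : ℝ) (hC : 0 < C)
    (hproj : ∀ g : E, C * ‖splitProj L V hc.symm g‖ ≤ infDist g (V : Set E))
    (α : ℝ) (hα0 : 0 < α) (hαC : α < C / 2) :
    ∃ C₀ : ℝ, 0 < C₀ ∧
      ∀ Γ : Set E, IsCompact Γ → IsConeSet V α Γ → μH[(h : ℝ)] Γ < ⊤ →
        (∀ᵐ x ∂(μH[(h : ℝ)].restrict Γ), 0 < lowerDensity (μH[(h : ℝ)].restrict Γ) h x) →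
        ∀ᵐ x ∂(μH[(h : ℝ)].restrict Γ), ∃ R : ℝ, 0 < R ∧ ∀ ℓ : ℝ, 0 < ℓ → ℓ ≤ R →
          ENNReal.ofReal C₀ * (lowerDensity (μH[(h : ℝ)].restrict Γ) h x) ^ 2 *
              ENNReal.ofReal (ℓ ^ h) ≤
            μH[(h : ℝ)] (splitProj V L hc '' (Γ ∩ closedBall x ℓ)) :=
  stmt16_general V L hc h C hC hproj α hαC
end
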